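/- arXiv:2501.12049 — 4 statements merged into one kernel-verified Lean document; each statement's English description precedes it below -/
import Mathlib

section
/- Let L > 0, let ς_Ne > 0 and ς_Di > 0 be real numbers, and let λ ∈ ℂ. Suppose φ₁, φ₂ : ℝ → ℂ both satisfy the KdV spectral ODE with parameter λ on [0,L], and satisfy the boundary conditions φ₂(0) = φ₁(0), ς_Ne·φ₁''(0) + ς_Di·φ₂''(0) = 0, φ₁(L) = φ₂(L) = 0, φ₁'(0) = φ₂'(0) = 0, φ₁'(L) = 0, and φ₂''(L) = 0. Then φ₁(x) = 0 and φ₂(x) = 0 for all x ∈ [0,L]. -/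
/-- A function `φ : ℝ → ℂ` satisfies the KdV spectral ODE with parameter `lam` on `[0, L]`:
it is three times continuously differentiable and `lam·φ + φ' + φ''' = 0` on `[0, L]`. -/
def KdVSpectralODE (lam : ℂ) (L : ℝ) (φ : ℝ → ℂ) : Prop :=
  ContDiff ℝ 3 φ ∧
    ∀ x ∈ Set.Icc (0 : ℝ) L, lam * φ x + deriv φ x + iteratedDeriv 3 φ x = 0

/-!
Write `J φ = (φ, φ', φ'')` and `T` for the companion matrix, so that a solution satisfies
`(J φ)' = T (J φ)` on `[0, L]`. The 2 × 2 minors of the pair `(J φ₁, J φ₂)` solve the adjoint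
system `W' = -T W`, so after the reflection `x ↦ L - x` they solve `W' = T W` again. The boundary
conditions make this reflected vector proportional to `J φ₂` at `x = L`; by uniqueness for linear
ODEs the two stay proportional on `[0, L]`, and comparing them at `x = 0` gives
`φ₁''(L) φ₂'(L)² = 0`. Either factor leaves one of the functions with zero Cauchy data at `L`,
hence zero; the coupling conditions at `0` then pass zero Cauchy data to the other one.
-/

open Set

theorem eqOn_Icc_of_hasDerivAt_of_lipschitzWith {E : Type*} [NormedAddCommGroup E]
    [NormedSpace ℝ E] {v : E → E} {K : NNReal} (hv : LipschitzWith K v) {f g : ℝ → E}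
    {a b t₀ : ℝ} (hf : ∀ t ∈ Icc a b, HasDerivAt f (v (f t)) t)
    (hg : ∀ t ∈ Icc a b, HasDerivAt g (v (g t)) t) (ht₀ : t₀ ∈ Icc a b) (heq : f t₀ = g t₀) :
    EqOn f g (Icc a b) := by
  have hf_cont : ContinuousOn f (Icc a b) := fun t ht => (hf t ht).continuousAt.continuousWithinAt
  have hg_cont : ContinuousOn g (Icc a b) := fun t ht => (hg t ht).continuousAt.continuousWithinAt
  rw [← Icc_union_Icc_eq_Icc ht₀.1 ht₀.2]
  refine EqOn.union ?_ ?_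
  · have hsub : Icc a t₀ ⊆ Icc a b := Icc_subset_Icc_right ht₀.2
    exact ODE_solution_unique_of_mem_Icc_left (v := fun _ => v) (s := fun _ => univ)
      (fun _ _ => hv.lipschitzOnWith) (hf_cont.mono hsub)
      (fun t ht => (hf t (hsub (Ioc_subset_Icc_self ht))).hasDerivWithinAt) (fun _ _ => trivial)
      (hg_cont.mono hsub)
      (fun t ht => (hg t (hsub (Ioc_subset_Icc_self ht))).hasDerivWithinAt) (fun _ _ => trivial)
      heq
  · have hsub : Icc t₀ b ⊆ Icc a b := Icc_subset_Icc_left ht₀.1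
    exact ODE_solution_unique (v := fun _ => v) (fun _ => hv) (hf_cont.mono hsub)
      (fun t ht => (hf t (hsub (Ico_subset_Icc_self ht))).hasDerivWithinAt) (hg_cont.mono hsub)
      (fun t ht => (hg t (hsub (Ico_subset_Icc_self ht))).hasDerivWithinAt) heq

theorem ContDiff.hasDerivAt_iteratedDeriv {𝕜 F : Type*} [NontriviallyNormedField 𝕜]
    [NormedAddCommGroup F] [NormedSpace 𝕜 F] {f : 𝕜 → F} {n : WithTop ℕ∞} (hf : ContDiff 𝕜 n f)
    {m : ℕ} (hm : m < n) (x : 𝕜) :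
    HasDerivAt (iteratedDeriv m f) (iteratedDeriv (m + 1) f x) x := by
  rw [iteratedDeriv_succ]
  exact (hf.differentiable_iteratedDeriv m hm x).hasDerivAt

namespace KdVSpectralODE

noncomputable def companion (lam : ℂ) : (ℂ × ℂ × ℂ) →L[ℂ] (ℂ × ℂ × ℂ) :=
  ((ContinuousLinearMap.fst ℂ ℂ ℂ).comp (ContinuousLinearMap.snd ℂ ℂ (ℂ × ℂ))).prod
    (((ContinuousLinearMap.snd ℂ ℂ ℂ).comp (ContinuousLinearMap.snd ℂ ℂ (ℂ × ℂ))).prod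
      ((-lam) • ContinuousLinearMap.fst ℂ ℂ (ℂ × ℂ) -
        (ContinuousLinearMap.fst ℂ ℂ ℂ).comp (ContinuousLinearMap.snd ℂ ℂ (ℂ × ℂ))))

@[simp] theorem companion_apply (lam : ℂ) (p : ℂ × ℂ × ℂ) :
    companion lam p = (p.2.1, p.2.2, -lam * p.1 - p.2.1) := by
  simp [companion]

noncomputable def jet (φ : ℝ → ℂ) (x : ℝ) : ℂ × ℂ × ℂ :=
  (φ x, deriv φ x, iteratedDeriv 2 φ x)

/-- The 2 × 2 minors of `(p, q)`, with signs chosen so that `wedge_companion` holds. -/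
def wedge (p q : ℂ × ℂ × ℂ) : ℂ × ℂ × ℂ :=
  (p.1 * q.2.1 - p.2.1 * q.1, -(p.1 * q.2.2 - p.2.2 * q.1),
    -(p.1 * q.2.1 - p.2.1 * q.1) + (p.2.1 * q.2.2 - p.2.2 * q.2.1))

theorem wedge_companion (lam : ℂ) (p q : ℂ × ℂ × ℂ) :
    wedge (companion lam p) q + wedge p (companion lam q) = -companion lam (wedge p q) := by
  simp only [wedge, companion_apply, Prod.mk_add_mk, Prod.neg_mk]
  refine Prod.ext ?_ (Prod.ext ?_ ?_) <;> ring

theorem hasDerivAt_wedge {f g : ℝ → ℂ × ℂ × ℂ} {f' g' : ℂ × ℂ × ℂ} {t : ℝ}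
    (hf : HasDerivAt f f' t) (hg : HasDerivAt g g' t) :
    HasDerivAt (fun x => wedge (f x) (g x)) (wedge f' (g t) + wedge (f t) g') t := by
  have hf₁ : HasDerivAt (fun x => (f x).1) f'.1 t := by
    simpa using hf.hasFDerivAt.fst.hasDerivAt
  have hf₂ : HasDerivAt (fun x => (f x).2.1) f'.2.1 t := by
    simpa using hf.hasFDerivAt.snd.fst.hasDerivAt
  have hf₃ : HasDerivAt (fun x => (f x).2.2) f'.2.2 t := by
    simpa using hf.hasFDerivAt.snd.snd.hasDerivAt
  have hg₁ : HasDerivAt (fun x => (g x).1) g'.1 t := by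
    simpa using hg.hasFDerivAt.fst.hasDerivAt
  have hg₂ : HasDerivAt (fun x => (g x).2.1) g'.2.1 t := by
    simpa using hg.hasFDerivAt.snd.fst.hasDerivAt
  have hg₃ : HasDerivAt (fun x => (g x).2.2) g'.2.2 t := by
    simpa using hg.hasFDerivAt.snd.snd.hasDerivAt
  have h₁₂ := (hf₁.mul hg₂).sub (hf₂.mul hg₁)
  have h₁₃ := (hf₁.mul hg₃).sub (hf₃.mul hg₁)
  have h₂₃ := (hf₂.mul hg₃).sub (hf₃.mul hg₂)
  refine (h₁₂.prodMk (h₁₃.neg.prodMk (h₁₂.neg.add h₂₃))).congr_deriv ?_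
  simp only [wedge, Prod.mk_add_mk]
  refine Prod.ext ?_ (Prod.ext ?_ ?_) <;> ring

theorem hasDerivAt_jet {lam : ℂ} {L : ℝ} {φ : ℝ → ℂ} (h : KdVSpectralODE lam L φ) {x : ℝ}
    (hx : x ∈ Icc 0 L) : HasDerivAt (jet φ) (companion lam (jet φ x)) x := by
  have h₀ := h.1.hasDerivAt_iteratedDeriv (m := 0) (by norm_num) x
  have h₁ := h.1.hasDerivAt_iteratedDeriv (m := 1) (by norm_num) x
  have h₂ := h.1.hasDerivAt_iteratedDeriv (m := 2) (by norm_num) x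
  rw [show iteratedDeriv 3 φ x = -lam * φ x - deriv φ x by linear_combination h.2 x hx] at h₂
  simp only [iteratedDeriv_zero, iteratedDeriv_one, zero_add] at h₀ h₁
  exact h₀.prodMk (h₁.prodMk h₂)

theorem jet_eqOn_zero {lam : ℂ} {L : ℝ} {φ : ℝ → ℂ} (h : KdVSpectralODE lam L φ) {a : ℝ}
    (ha : a ∈ Icc 0 L) (h0 : jet φ a = 0) : EqOn (jet φ) 0 (Icc 0 L) :=
  eqOn_Icc_of_hasDerivAt_of_lipschitzWith (companion lam).lipschitz
    (fun _ hx => h.hasDerivAt_jet hx)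
    (fun t _ => by rw [Pi.zero_apply, map_zero]; exact hasDerivAt_const t 0) ha h0

theorem hasDerivAt_wedge_jet_reflect {lam : ℂ} {L : ℝ} {φ₁ φ₂ : ℝ → ℂ}
    (h₁ : KdVSpectralODE lam L φ₁) (h₂ : KdVSpectralODE lam L φ₂) {x : ℝ} (hx : x ∈ Icc 0 L) :
    HasDerivAt (fun y => wedge (jet φ₁ (L - y)) (jet φ₂ (L - y)))
      (companion lam (wedge (jet φ₁ (L - x)) (jet φ₂ (L - x)))) x := by
  have hx' : L - x ∈ Icc 0 L := ⟨by linarith [hx.2], by linarith [hx.1]⟩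
  have := (hasDerivAt_wedge (h₁.hasDerivAt_jet hx') (h₂.hasDerivAt_jet hx')).comp_const_sub L x
  rwa [wedge_companion, neg_neg] at this

theorem iteratedDeriv_two_mul_deriv_sq_eq_zero {lam : ℂ} {L : ℝ} {φ₁ φ₂ : ℝ → ℂ}
    (h₁ : KdVSpectralODE lam L φ₁) (h₂ : KdVSpectralODE lam L φ₂) (hL : 0 ≤ L)
    (h0 : φ₂ 0 = φ₁ 0) (h₁L : φ₁ L = 0) (h₂L : φ₂ L = 0) (h₁0' : deriv φ₁ 0 = 0)
    (h₂0' : deriv φ₂ 0 = 0) (h₁L' : deriv φ₁ L = 0) (h₂L'' : iteratedDeriv 2 φ₂ L = 0) :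
    iteratedDeriv 2 φ₁ L * deriv φ₂ L ^ 2 = 0 := by
  set R : ℝ → ℂ × ℂ × ℂ := fun y => wedge (jet φ₁ (L - y)) (jet φ₂ (L - y)) with hR_def
  set β := φ₁ 0 * (iteratedDeriv 2 φ₂ 0 - iteratedDeriv 2 φ₁ 0)
  have hprop : EqOn (fun x => deriv φ₂ L • R x) (fun x => -β • jet φ₂ x) (Icc 0 L) := by
    refine eqOn_Icc_of_hasDerivAt_of_lipschitzWith (companion lam).lipschitz
      (fun x hx => ?_) (fun x hx => ?_) (right_mem_Icc.2 hL) ?_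
    · rw [map_smul]; exact (hasDerivAt_wedge_jet_reflect h₁ h₂ hx).const_smul (deriv φ₂ L)
    · rw [map_smul]; exact (h₂.hasDerivAt_jet hx).const_smul (-β)
    · simp only [hR_def, wedge, jet, sub_self, h0, h₁0', h₂0', h₂L, h₂L'', Prod.smul_mk,
        smul_eq_mul, Prod.mk.injEq]
      refine ⟨?_, ?_, ?_⟩ <;> ring
  have at0 := hprop (left_mem_Icc.2 hL)
  simp only [hR_def, wedge, jet, sub_zero, h0, h₁L, h₂L, h₁L', h₂L'', h₂0', Prod.smul_mk,
    smul_eq_mul, Prod.mk.injEq] at at0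
  obtain ⟨e₁, -, e₃⟩ := at0
  have hβ : β = 0 := pow_eq_zero_iff two_ne_zero |>.1 <| by
    linear_combination (iteratedDeriv 2 φ₂ 0 - iteratedDeriv 2 φ₁ 0) * e₁
  linear_combination -e₃ + iteratedDeriv 2 φ₂ 0 * hβ

theorem jet_zero_eq_zero_iff {φ₁ φ₂ : ℝ → ℂ} {a b : ℂ} (ha : a ≠ 0) (hb : b ≠ 0)
    (h0 : φ₂ 0 = φ₁ 0) (h0'' : a * iteratedDeriv 2 φ₁ 0 + b * iteratedDeriv 2 φ₂ 0 = 0)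
    (h₁0' : deriv φ₁ 0 = 0) (h₂0' : deriv φ₂ 0 = 0) : jet φ₁ 0 = 0 ↔ jet φ₂ 0 = 0 := by
  have key : iteratedDeriv 2 φ₁ 0 = 0 ↔ iteratedDeriv 2 φ₂ 0 = 0 := by
    constructor <;> intro h <;> simpa [h, ha, hb] using h0''
  simp only [jet, h0, h₁0', h₂0', Prod.ext_iff, Prod.fst_zero, Prod.snd_zero, key]

end KdVSpectralODE

open KdVSpectralODE in
theorem stmt0 (L : ℝ) (hL : 0 < L) (ςNe ςDi : ℝ) (hNe : 0 < ςNe) (hDi : 0 < ςDi)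
    (lam : ℂ) (φ₁ φ₂ : ℝ → ℂ)
    (h1 : KdVSpectralODE lam L φ₁) (h2 : KdVSpectralODE lam L φ₂)
    (hb0 : φ₂ 0 = φ₁ 0)
    (hb1 : (ςNe : ℂ) * iteratedDeriv 2 φ₁ 0 + (ςDi : ℂ) * iteratedDeriv 2 φ₂ 0 = 0)
    (hb2 : φ₁ L = 0) (hb3 : φ₂ L = 0)
    (hb4 : deriv φ₁ 0 = 0) (hb5 : deriv φ₂ 0 = 0)
    (hb6 : deriv φ₁ L = 0) (hb7 : iteratedDeriv 2 φ₂ L = 0) :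
    ∀ x ∈ Set.Icc (0 : ℝ) L, φ₁ x = 0 ∧ φ₂ x = 0 := by
  have hcouple : jet φ₁ 0 = 0 ↔ jet φ₂ 0 = 0 :=
    jet_zero_eq_zero_iff (mod_cast hNe.ne') (mod_cast hDi.ne') hb0 hb1 hb4 hb5
  have hjet₀ : jet φ₁ 0 = 0 ∧ jet φ₂ 0 = 0 := by
    rcases mul_eq_zero.1 (iteratedDeriv_two_mul_deriv_sq_eq_zero h1 h2 hL.le hb0 hb2 hb3 hb4 hb5
      hb6 hb7) with h | h
    · have hφ₁ := h1.jet_eqOn_zero (right_mem_Icc.2 hL.le) (by simp [jet, hb2, hb6, h])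
        (left_mem_Icc.2 hL.le)
      exact ⟨hφ₁, hcouple.1 hφ₁⟩
    · have hφ₂ := h2.jet_eqOn_zero (right_mem_Icc.2 hL.le)
        (by simp [jet, hb3, hb7, pow_eq_zero_iff two_ne_zero |>.1 h]) (left_mem_Icc.2 hL.le)
      exact ⟨hcouple.2 hφ₂, hφ₂⟩
  intro x hx
  exact ⟨congrArg Prod.fst (h1.jet_eqOn_zero (left_mem_Icc.2 hL.le) hjet₀.1 hx),
    congrArg Prod.fst (h2.jet_eqOn_zero (left_mem_Icc.2 hL.le) hjet₀.2 hx)⟩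
end

section
/- Let L > 0, let ς_Ne > 0 and ς_Di > 0 be real numbers, and let λ ∈ ℂ. Suppose φ₁, φ₂ : ℝ → ℂ both satisfy the KdV spectral ODE with parameter λ on [0,L], and satisfy the boundary conditions φ₂(0) = φ₁(0), ς_Ne·φ₁''(0) + ς_Di·φ₂''(0) = 0, φ₁(L) = φ₂(L) = 0, φ₁'(0) = φ₂'(0) = 0, φ₁'(L) = 0, and φ₂''(L) = 0. If moreover φ₁''(L) = 0 or φ₁''(0) = φ₂''(0), then φ₁(x) = 0 and φ₂(x) = 0 for all x ∈ [0,L]. -/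
open Set

section Jet

variable {E : Type*} [NormedAddCommGroup E] [NormedSpace ℝ E]

noncomputable def jet2 (f : ℝ → E) (t : ℝ) : E × E × E :=
  (f t, deriv f t, iteratedDeriv 2 f t)

lemma ContDiff.hasDerivAt_iteratedDeriv_s1 {n : WithTop ℕ∞} {f : ℝ → E} (hf : ContDiff ℝ n f)
    (m : ℕ) (hmn : m < n) (t : ℝ) :
    HasDerivAt (iteratedDeriv m f) (iteratedDeriv (m + 1) f t) t := by
  rw [iteratedDeriv_succ]
  exact ((hf.differentiable_iteratedDeriv m hmn) t).hasDerivAt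

lemma hasDerivAt_jet2 {f : ℝ → E} (hf : ContDiff ℝ 3 f) (t : ℝ) :
    HasDerivAt (jet2 f) (deriv f t, iteratedDeriv 2 f t, iteratedDeriv 3 f t) t := by
  have h0 := hf.hasDerivAt_iteratedDeriv_s1 0 (by norm_num) t
  have h1 := hf.hasDerivAt_iteratedDeriv_s1 1 (by norm_num) t
  have h2 := hf.hasDerivAt_iteratedDeriv_s1 2 (by norm_num) t
  rw [iteratedDeriv_zero, zero_add, iteratedDeriv_one] at h0
  rw [iteratedDeriv_one] at h1
  exact h0.prodMk (h1.prodMk h2)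

lemma continuous_jet2 {f : ℝ → E} (hf : ContDiff ℝ 2 f) : Continuous (jet2 f) := by
  have h1 := hf.continuous_iteratedDeriv 1 (by norm_num)
  rw [iteratedDeriv_one] at h1
  exact hf.continuous.prodMk (h1.prodMk (hf.continuous_iteratedDeriv 2 le_rfl))

end Jet

noncomputable def kdvField (lam : ℂ) : ℂ × ℂ × ℂ →L[ℂ] ℂ × ℂ × ℂ :=
  LinearMap.toContinuousLinearMap
    { toFun := fun p => (p.2.1, p.2.2, -(lam * p.1 + p.2.1))
      map_add' := fun p q => by simp only [Prod.fst_add, Prod.snd_add, Prod.mk_add_mk]; ring_nf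
      map_smul' := fun c p => by
        simp only [Prod.smul_fst, Prod.smul_snd, Prod.smul_mk, smul_eq_mul, RingHom.id_apply]
        ring_nf }

lemma kdvField_apply (lam : ℂ) (p : ℂ × ℂ × ℂ) :
    kdvField lam p = (p.2.1, p.2.2, -(lam * p.1 + p.2.1)) := rfl

namespace KdVSpectralODE

variable {lam : ℂ} {L : ℝ} {φ ψ : ℝ → ℂ}

lemma hasDerivAt_jet2_kdvField (hφ : KdVSpectralODE lam L φ) {t : ℝ} (ht : t ∈ Icc 0 L) :
    HasDerivAt (jet2 φ) (kdvField lam (jet2 φ t)) t := by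
  have h3 : iteratedDeriv 3 φ t = -(lam * φ t + deriv φ t) := by
    linear_combination hφ.2 t ht
  simpa only [kdvField_apply, jet2, h3] using hasDerivAt_jet2 hφ.1 t

lemma eqOn_jet2 (hφ : KdVSpectralODE lam L φ) (hψ : KdVSpectralODE lam L ψ) {x₀ : ℝ}
    (hx₀ : x₀ ∈ Icc 0 L) (h : jet2 φ x₀ = jet2 ψ x₀) :
    EqOn (jet2 φ) (jet2 ψ) (Icc 0 L) := by
  have hlip : LipschitzOnWith ‖kdvField lam‖₊ (kdvField lam) univ :=
    (kdvField lam).lipschitz.lipschitzOnWith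
  have hcφ := (continuous_jet2 (hφ.1.of_le (by norm_num))).continuousOn (s := Icc 0 L)
  have hcψ := (continuous_jet2 (hψ.1.of_le (by norm_num))).continuousOn (s := Icc 0 L)
  rw [← Icc_union_Icc_eq_Icc hx₀.1 hx₀.2]
  refine EqOn.union ?_ ?_
  · exact ODE_solution_unique_of_mem_Icc_left (fun _ _ => hlip)
      (hcφ.mono (Icc_subset_Icc_right hx₀.2))
      (fun t ht => (hφ.hasDerivAt_jet2_kdvField ⟨ht.1.le, ht.2.trans hx₀.2⟩).hasDerivWithinAt)
      (fun _ _ => mem_univ _)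
      (hcψ.mono (Icc_subset_Icc_right hx₀.2))
      (fun t ht => (hψ.hasDerivAt_jet2_kdvField ⟨ht.1.le, ht.2.trans hx₀.2⟩).hasDerivWithinAt)
      (fun _ _ => mem_univ _) h
  · exact ODE_solution_unique_of_mem_Icc_right (fun _ _ => hlip)
      (hcφ.mono (Icc_subset_Icc_left hx₀.1))
      (fun t ht => (hφ.hasDerivAt_jet2_kdvField ⟨hx₀.1.trans ht.1, ht.2.le⟩).hasDerivWithinAt)
      (fun _ _ => mem_univ _)
      (hcψ.mono (Icc_subset_Icc_left hx₀.1))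
      (fun t ht => (hψ.hasDerivAt_jet2_kdvField ⟨hx₀.1.trans ht.1, ht.2.le⟩).hasDerivWithinAt)
      (fun _ _ => mem_univ _) h

lemma zero (lam : ℂ) (L : ℝ) : KdVSpectralODE lam L 0 :=
  ⟨contDiff_const, fun _ _ => by simp⟩

lemma jet2_zero : jet2 (0 : ℝ → ℂ) = 0 := by
  ext t <;> simp [jet2]

lemma eqOn_zero_of_jet2_eq_zero (hφ : KdVSpectralODE lam L φ) {x₀ : ℝ} (hx₀ : x₀ ∈ Icc 0 L)
    (h : jet2 φ x₀ = 0) : EqOn (jet2 φ) 0 (Icc 0 L) := by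
  have h0 := hφ.eqOn_jet2 (zero lam L) hx₀ (by rw [h, jet2_zero]; rfl)
  rwa [jet2_zero] at h0

end KdVSpectralODE

theorem stmt1_general (L : ℝ) (hL : 0 < L) (ςNe ςDi : ℝ) (hDi : 0 < ςDi)
    (lam : ℂ) (φ₁ φ₂ : ℝ → ℂ)
    (h1 : KdVSpectralODE lam L φ₁) (h2 : KdVSpectralODE lam L φ₂)
    (hb0 : φ₂ 0 = φ₁ 0)
    (hb1 : (ςNe : ℂ) * iteratedDeriv 2 φ₁ 0 + (ςDi : ℂ) * iteratedDeriv 2 φ₂ 0 = 0)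
    (hb2 : φ₁ L = 0)
    (hb4 : deriv φ₁ 0 = 0) (hb5 : deriv φ₂ 0 = 0)
    (hb6 : deriv φ₁ L = 0) (hb7 : iteratedDeriv 2 φ₂ L = 0)
    (hextra : iteratedDeriv 2 φ₁ L = 0 ∨ iteratedDeriv 2 φ₁ 0 = iteratedDeriv 2 φ₂ 0) :
    ∀ x ∈ Set.Icc (0 : ℝ) L, φ₁ x = 0 ∧ φ₂ x = 0 := by
  have h0 : (0 : ℝ) ∈ Icc 0 L := ⟨le_rfl, hL.le⟩
  have hL' : L ∈ Icc 0 L := ⟨hL.le, le_rfl⟩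
  have hφ₁L : iteratedDeriv 2 φ₁ L = 0 := by
    rcases hextra with hφ₁L | hsame
    · exact hφ₁L
    · have heq := h1.eqOn_jet2 h2 h0 (by simp only [jet2, hb0, hb4, hb5, hsame])
      exact (congrArg (·.2.2) (heq hL')).trans hb7
  have hφ₁ := h1.eqOn_zero_of_jet2_eq_zero hL' (by simp [jet2, hb2, hb6, hφ₁L])
  have hφ₁0 : φ₁ 0 = 0 := congrArg Prod.fst (hφ₁ h0)
  have hφ₁''0 : iteratedDeriv 2 φ₁ 0 = 0 := congrArg (·.2.2) (hφ₁ h0)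
  have hφ₂''0 : iteratedDeriv 2 φ₂ 0 = 0 := by
    rw [hφ₁''0, mul_zero, zero_add] at hb1
    exact (mul_eq_zero.mp hb1).resolve_left (by exact_mod_cast hDi.ne')
  have hφ₂ := h2.eqOn_zero_of_jet2_eq_zero h0 (by simp [jet2, hb0, hφ₁0, hb5, hφ₂''0])
  exact fun x hx => ⟨congrArg Prod.fst (hφ₁ hx), congrArg Prod.fst (hφ₂ hx)⟩

theorem stmt1 (L : ℝ) (hL : 0 < L) (ςNe ςDi : ℝ) (hNe : 0 < ςNe) (hDi : 0 < ςDi)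
    (lam : ℂ) (φ₁ φ₂ : ℝ → ℂ)
    (h1 : KdVSpectralODE lam L φ₁) (h2 : KdVSpectralODE lam L φ₂)
    (hb0 : φ₂ 0 = φ₁ 0)
    (hb1 : (ςNe : ℂ) * iteratedDeriv 2 φ₁ 0 + (ςDi : ℂ) * iteratedDeriv 2 φ₂ 0 = 0)
    (hb2 : φ₁ L = 0) (hb3 : φ₂ L = 0)
    (hb4 : deriv φ₁ 0 = 0) (hb5 : deriv φ₂ 0 = 0)
    (hb6 : deriv φ₁ L = 0) (hb7 : iteratedDeriv 2 φ₂ L = 0)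
    (hextra : iteratedDeriv 2 φ₁ L = 0 ∨ iteratedDeriv 2 φ₁ 0 = iteratedDeriv 2 φ₂ 0) :
    ∀ x ∈ Set.Icc (0 : ℝ) L, φ₁ x = 0 ∧ φ₂ x = 0 :=
  stmt1_general L hL ςNe ςDi hDi lam φ₁ φ₂ h1 h2 hb0 hb1 hb2 hb4 hb5 hb6 hb7 hextra
end

section
/- Let L > 0 and let ς_Ne > 0 and ς_Di > 0 be real numbers. Suppose φ₁, φ₂ : ℝ → ℂ both satisfy the KdV spectral ODE with parameter λ = 0 on [0,L], and satisfy the boundary conditions φ₂(0) = φ₁(0), ς_Ne·φ₁''(0) + ς_Di·φ₂''(0) = 0, φ₁(L) = φ₂(L) = 0, φ₁'(0) = φ₂'(0) = 0, φ₁'(L) = 0, and φ₂''(L) = 0. Then φ₁(x) = 0 and φ₂(x) = 0 for all x ∈ [0,L]. -/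
open Set RealInnerProductSpace

/-- Representation of solutions of `φ' + φ''' = 0` on `[0,L]` with `φ'(0) = 0`. -/
lemma kdv_rep (L : ℝ) (φ : ℝ → ℂ)
    (hc : ContDiff ℝ 3 φ)
    (hode : ∀ x ∈ Set.Icc (0 : ℝ) L, (0:ℂ) * φ x + deriv φ x + iteratedDeriv 3 φ x = 0)
    (h0 : deriv φ 0 = 0) :
    ∀ x ∈ Set.Icc (0:ℝ) L,
      φ x = -(iteratedDeriv 2 φ 0) * Real.cos x + (φ 0 + iteratedDeriv 2 φ 0) ∧
      deriv φ x = iteratedDeriv 2 φ 0 * Real.sin x ∧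
      iteratedDeriv 2 φ x = iteratedDeriv 2 φ 0 * Real.cos x := by
  have hφd : Differentiable ℝ φ := hc.differentiable (by norm_num)
  have hc2 : ContDiff ℝ 2 (deriv φ) := ((contDiff_succ_iff_deriv (n := 2)).mp hc).2.2
  have hc1 : ContDiff ℝ 1 (deriv (deriv φ)) := ((contDiff_succ_iff_deriv (n := 1)).mp hc2).2.2
  have hd1 : Differentiable ℝ (deriv φ) := hc2.differentiable (by norm_num)
  have hd2 : Differentiable ℝ (deriv (deriv φ)) := hc1.differentiable (by norm_num)
  have key2 : iteratedDeriv 2 φ = deriv (deriv φ) := by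
    rw [iteratedDeriv_succ, iteratedDeriv_one]
  have key3 : iteratedDeriv 3 φ = deriv (deriv (deriv φ)) := by
    rw [iteratedDeriv_succ, key2]
  -- step 1: φ + φ'' is constant on [0, L]
  set c : ℂ := φ 0 + deriv (deriv φ) 0 with hc_def
  have hg : ∀ x ∈ Icc (0:ℝ) L, φ x + deriv (deriv φ) x = c := by
    have := constant_of_has_deriv_right_zero
      (f := fun x => φ x + deriv (deriv φ) x) (a := 0) (b := L)
      (by exact (hφd.continuous.add hd2.continuous).continuousOn)
      (fun x hx => by
        have hx' : x ∈ Icc (0:ℝ) L := Ico_subset_Icc_self hx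
        have h1 : HasDerivAt (fun x => φ x + deriv (deriv φ) x)
            (deriv φ x + deriv (deriv (deriv φ)) x) x :=
          ((hφd x).hasDerivAt).add ((hd2 x).hasDerivAt)
        have h2 : deriv φ x + deriv (deriv (deriv φ)) x = 0 := by
          have := hode x hx'
          rw [key3] at this
          linear_combination this
        rw [h2] at h1
        exact h1.hasDerivWithinAt.mono (fun y hy => hy))
    exact this
  set A : ℂ := -(deriv (deriv φ) 0) with hA_def
  -- the model and its derivatives
  set m : ℝ → ℂ := fun x => A * Real.cos x + c with hm_def
  set m1 : ℝ → ℂ := fun x => -A * Real.sin x with hm1_def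
  have hm : ∀ x : ℝ, HasDerivAt m (m1 x) x := by
    intro x
    have : HasDerivAt (fun x : ℝ => ((Real.cos x : ℝ) : ℂ)) (-Real.sin x : ℝ) x :=
      (Real.hasDerivAt_cos x).ofReal_comp
    simpa [hm_def, hm1_def, mul_comm, neg_mul, mul_neg] using
      ((this.const_mul A).add_const c)
  have hm1 : ∀ x : ℝ, HasDerivAt m1 (-A * Real.cos x) x := by
    intro x
    have : HasDerivAt (fun x : ℝ => ((Real.sin x : ℝ) : ℂ)) (Real.cos x : ℝ) x :=
      (Real.hasDerivAt_sin x).ofReal_comp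
    simpa [hm1_def] using this.const_mul (-A)
  -- the difference and its derivative
  set w : ℝ → ℂ := fun x => φ x - m x with hw_def
  set w1 : ℝ → ℂ := fun x => deriv φ x - m1 x with hw1_def
  have hw : ∀ x : ℝ, HasDerivAt w (w1 x) x := fun x => ((hφd x).hasDerivAt).sub (hm x)
  have hw1 : ∀ x ∈ Icc (0:ℝ) L, HasDerivAt w1 (-(w x)) x := by
    intro x hx
    have h1 : HasDerivAt w1 (deriv (deriv φ) x - (-A * Real.cos x)) x :=
      ((hd1 x).hasDerivAt).sub (hm1 x)
    have h2 : deriv (deriv φ) x - (-A * Real.cos x) = -(w x) := by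
      have h3 : deriv (deriv φ) x = c - φ x := by
        have := hg x hx; linear_combination this
      rw [h3]
      simp only [hw_def, hm_def]
      ring
    rwa [h2] at h1
  -- energy
  set E : ℝ → ℝ := fun x => ⟪w x, w x⟫ + ⟪w1 x, w1 x⟫ with hE_def
  have hwcont : Continuous w := hφd.continuous.sub (by
    exact ((continuous_const.mul (Complex.continuous_ofReal.comp Real.continuous_cos)).add
      continuous_const))
  have hw1cont : Continuous w1 := hd1.continuous.sub (by
    exact (continuous_const.mul (Complex.continuous_ofReal.comp Real.continuous_sin)))
  have hE : ∀ x ∈ Icc (0:ℝ) L, E x = E 0 := by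
    apply constant_of_has_deriv_right_zero
    · exact ((hwcont.inner hwcont).add (hw1cont.inner hw1cont)).continuousOn
    · intro x hx
      have hx' : x ∈ Icc (0:ℝ) L := Ico_subset_Icc_self hx
      have hEx : HasDerivAt E ((⟪w x, w1 x⟫ + ⟪w1 x, w x⟫) + (⟪w1 x, -(w x)⟫ + ⟪-(w x), w1 x⟫)) x :=
        (HasDerivAt.inner ℝ (hw x) (hw x)).add (HasDerivAt.inner ℝ (hw1 x hx') (hw1 x hx'))
      have : (⟪w x, w1 x⟫ + ⟪w1 x, w x⟫) + (⟪w1 x, -(w x)⟫ + ⟪-(w x), w1 x⟫) = 0 := by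
        rw [real_inner_comm (w1 x) (w x), inner_neg_right, inner_neg_left,
          real_inner_comm (w x) (w1 x)]
        ring
      rw [this] at hEx
      exact hEx.hasDerivWithinAt.mono (fun y hy => hy)
  have hw0 : w 0 = 0 := by simp [hw_def, hm_def, hA_def, hc_def]
  have hw10 : w1 0 = 0 := by simp [hw1_def, hm1_def, h0]
  have hE0 : E 0 = 0 := by simp [hE_def, hw0, hw10]
  -- conclude w = 0, w1 = 0 on Icc
  have hwz : ∀ x ∈ Icc (0:ℝ) L, w x = 0 ∧ w1 x = 0 := by
    intro x hx
    have hEx : E x = 0 := (hE x hx).trans hE0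
    have h1 : (0:ℝ) ≤ ⟪w x, w x⟫ := real_inner_self_nonneg
    have h2 : (0:ℝ) ≤ ⟪w1 x, w1 x⟫ := real_inner_self_nonneg
    have h3 : ⟪w x, w x⟫ = 0 := by simp only [hE_def] at hEx; linarith
    have h4 : ⟪w1 x, w1 x⟫ = 0 := by simp only [hE_def] at hEx; linarith
    exact ⟨inner_self_eq_zero.mp h3, inner_self_eq_zero.mp h4⟩
  -- final conclusions
  intro x hx
  obtain ⟨hwx, hw1x⟩ := hwz x hx
  have hφx : φ x = m x := by rwa [hw_def, sub_eq_zero] at hwx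
  have hdx : deriv φ x = m1 x := by rwa [hw1_def, sub_eq_zero] at hw1x
  have hA0 : A = -(iteratedDeriv 2 φ 0) := by rw [hA_def, key2]
  refine ⟨?_, ?_, ?_⟩
  · rw [hφx, hm_def]; simp only [hA0, hc_def, key2]; try ring
  · rw [hdx, hm1_def]; simp only [hA0]; try ring
  · rw [key2]
    have h3 : deriv (deriv φ) x = c - φ x := by
      have := hg x hx; linear_combination this
    rw [h3, hφx, hm_def]
    simp only [hA0, key2]
    ring

theorem stmt2 (L : ℝ) (hL : 0 < L) (ςNe ςDi : ℝ) (hNe : 0 < ςNe) (hDi : 0 < ςDi)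
    (φ₁ φ₂ : ℝ → ℂ)
    (h1 : KdVSpectralODE 0 L φ₁) (h2 : KdVSpectralODE 0 L φ₂)
    (hb0 : φ₂ 0 = φ₁ 0)
    (hb1 : (ςNe : ℂ) * iteratedDeriv 2 φ₁ 0 + (ςDi : ℂ) * iteratedDeriv 2 φ₂ 0 = 0)
    (hb2 : φ₁ L = 0) (hb3 : φ₂ L = 0)
    (hb4 : deriv φ₁ 0 = 0) (hb5 : deriv φ₂ 0 = 0)
    (hb6 : deriv φ₁ L = 0) (hb7 : iteratedDeriv 2 φ₂ L = 0) :
    ∀ x ∈ Set.Icc (0 : ℝ) L, φ₁ x = 0 ∧ φ₂ x = 0 := by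
  have rep1 := kdv_rep L φ₁ h1.1 h1.2 hb4
  have rep2 := kdv_rep L φ₂ h2.1 h2.2 hb5
  set a1 : ℂ := iteratedDeriv 2 φ₁ 0 with ha1
  set a2 : ℂ := iteratedDeriv 2 φ₂ 0 with ha2
  have hLmem : L ∈ Set.Icc (0:ℝ) L := Set.right_mem_Icc.mpr hL.le
  obtain ⟨e1, e2, e3⟩ := rep1 L hLmem
  obtain ⟨f1, f2, f3⟩ := rep2 L hLmem
  -- key equations
  have k1 : a1 * Real.sin L = 0 := by rw [hb6] at e2; linear_combination -e2
  have k2 : a2 * Real.cos L = 0 := by rw [hb7] at f3; linear_combination -f3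
  -- a₁ = 0 and a₂ = 0
  have ha10 : a1 = 0 := by
    by_cases hs : Real.sin L = 0
    · have hcos : Real.cos L ≠ 0 := by
        intro hcz
        have := Real.sin_sq_add_cos_sq L
        rw [hs, hcz] at this; norm_num at this
      have ha20 : a2 = 0 := by
        have : (Real.cos L : ℂ) ≠ 0 := by exact_mod_cast hcos
        exact (mul_eq_zero.mp k2).resolve_right this
      rw [ha20, mul_zero, add_zero] at hb1
      have : (ςNe : ℂ) ≠ 0 := by exact_mod_cast hNe.ne'
      exact (mul_eq_zero.mp hb1).resolve_left this
    · have : (Real.sin L : ℂ) ≠ 0 := by exact_mod_cast hs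
      exact (mul_eq_zero.mp k1).resolve_right this
  have ha20 : a2 = 0 := by
    rw [ha10, mul_zero, zero_add] at hb1
    have : (ςDi : ℂ) ≠ 0 := by exact_mod_cast hDi.ne'
    exact (mul_eq_zero.mp hb1).resolve_left this
  -- the constants vanish
  have hc1 : φ₁ 0 = 0 := by
    rw [hb2, ha10] at e1
    linear_combination -e1
  have hc2 : φ₂ 0 = 0 := by
    rw [hb3, ha20] at f1
    linear_combination -f1
  intro x hx
  obtain ⟨g1, _, _⟩ := rep1 x hx
  obtain ⟨g2, _, _⟩ := rep2 x hx
  rw [ha10, hc1] at g1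
  rw [ha20, hc2] at g2
  constructor
  · rw [g1]; ring
  · rw [g2]; ring
end

section
/- Let L > 0, let ς_Ne > 0 and ς_Di > 0 be real numbers, and let λ ∈ ℂ with λ ≠ 0 be such that the polynomial P_λ(μ) = μ³ + μ + λ has three pairwise distinct roots. Suppose φ₁, φ₂ : ℝ → ℂ both satisfy the KdV spectral ODE with parameter λ on [0,L], satisfy the boundary conditions φ₂(0) = φ₁(0), ς_Ne·φ₁''(0) + ς_Di·φ₂''(0) = 0, φ₁(L) = φ₂(L) = 0, φ₁'(0) = φ₂'(0) = 0, φ₁'(L) = 0, φ₂''(L) = 0, and suppose moreover φ₁''(L) ≠ 0 and φ₁''(0) ≠ φ₂''(0). Then φ₂'(L) = 0. -/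
open Set

/-- `(u₀, u₁, u₂)` is the phase curve `(u, u', u'')` of a solution of `u''' = a u + b u'` on `s`. -/
def IsThirdOrderSolution (a b : ℂ) (s : Set ℝ) (u₀ u₁ u₂ : ℝ → ℂ) : Prop :=
  ∀ x ∈ s, HasDerivAt u₀ (u₁ x) x ∧ HasDerivAt u₁ (u₂ x) x ∧
    HasDerivAt u₂ (a * u₀ x + b * u₁ x) x

def wronskian3 (u₀ u₁ u₂ v₀ v₁ v₂ w₀ w₁ w₂ : ℝ → ℂ) (x : ℝ) : ℂ :=
  !![u₀ x, v₀ x, w₀ x; u₁ x, v₁ x, w₁ x; u₂ x, v₂ x, w₂ x].det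

theorem wronskian3_apply (u₀ u₁ u₂ v₀ v₁ v₂ w₀ w₁ w₂ : ℝ → ℂ) (x : ℝ) :
    wronskian3 u₀ u₁ u₂ v₀ v₁ v₂ w₀ w₁ w₂ x =
      u₀ x * (v₁ x * w₂ x - v₂ x * w₁ x) - v₀ x * (u₁ x * w₂ x - u₂ x * w₁ x)
        + w₀ x * (u₁ x * v₂ x - u₂ x * v₁ x) := by
  simp [wronskian3, Matrix.det_fin_three]
  ring

namespace IsThirdOrderSolution

variable {a b : ℂ} {s : Set ℝ} {u₀ u₁ u₂ v₀ v₁ v₂ w₀ w₁ w₂ : ℝ → ℂ}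

theorem deriv (hu : IsThirdOrderSolution a b s u₀ u₁ u₂) :
    IsThirdOrderSolution a b s u₁ u₂ (fun x => a * u₀ x + b * u₁ x) := fun x hx =>
  let ⟨h₀, h₁, h₂⟩ := hu x hx
  ⟨h₁, h₂, (h₀.const_mul a).add (h₁.const_mul b)⟩

/-- Differentiating the determinant row by row, the first two rows reproduce rows of the
determinant and the third yields `a • row₀ + b • row₁`; all three terms vanish. -/
theorem hasDerivAt_wronskian3 (hu : IsThirdOrderSolution a b s u₀ u₁ u₂)
    (hv : IsThirdOrderSolution a b s v₀ v₁ v₂) (hw : IsThirdOrderSolution a b s w₀ w₁ w₂)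
    {x : ℝ} (hx : x ∈ s) :
    HasDerivAt (wronskian3 u₀ u₁ u₂ v₀ v₁ v₂ w₀ w₁ w₂) 0 x := by
  obtain ⟨hu₀, hu₁, hu₂⟩ := hu x hx
  obtain ⟨hv₀, hv₁, hv₂⟩ := hv x hx
  obtain ⟨hw₀, hw₁, hw₂⟩ := hw x hx
  have H := ((hu₀.mul ((hv₁.mul hw₂).sub (hv₂.mul hw₁))).sub
    (hv₀.mul ((hu₁.mul hw₂).sub (hu₂.mul hw₁)))).add
    (hw₀.mul ((hu₁.mul hv₂).sub (hu₂.mul hv₁)))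
  rw [funext (wronskian3_apply u₀ u₁ u₂ v₀ v₁ v₂ w₀ w₁ w₂)]
  refine H.congr_deriv ?_
  simp only [Pi.mul_apply, Pi.sub_apply]
  ring

theorem wronskian3_right_eq_left {l r : ℝ} (hlr : l ≤ r)
    (hu : IsThirdOrderSolution a b (Icc l r) u₀ u₁ u₂)
    (hv : IsThirdOrderSolution a b (Icc l r) v₀ v₁ v₂)
    (hw : IsThirdOrderSolution a b (Icc l r) w₀ w₁ w₂) :
    wronskian3 u₀ u₁ u₂ v₀ v₁ v₂ w₀ w₁ w₂ r = wronskian3 u₀ u₁ u₂ v₀ v₁ v₂ w₀ w₁ w₂ l := by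
  have hW := fun x (hx : x ∈ Icc l r) => hasDerivAt_wronskian3 hu hv hw hx
  exact constant_of_has_deriv_right_zero (fun x hx => (hW x hx).continuousAt.continuousWithinAt)
    (fun x hx => (hW x (Ico_subset_Icc_self hx)).hasDerivWithinAt) r (right_mem_Icc.mpr hlr)

end IsThirdOrderSolution

theorem KdVSpectralODE.isThirdOrderSolution {lam : ℂ} {L : ℝ} {φ : ℝ → ℂ}
    (h : KdVSpectralODE lam L φ) :
    IsThirdOrderSolution (-lam) (-1) (Icc 0 L) φ (deriv φ) (iteratedDeriv 2 φ) := by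
  obtain ⟨hφ, hode⟩ := h
  intro x hx
  have hd : ∀ m < 3, HasDerivAt (iteratedDeriv m φ) (iteratedDeriv (m + 1) φ x) x := by
    intro m hm
    rw [iteratedDeriv_succ]
    exact (hφ.differentiable_iteratedDeriv m (by exact_mod_cast hm) x).hasDerivAt
  have h3 : iteratedDeriv 3 φ x = -lam * φ x + -1 * deriv φ x := by
    linear_combination hode x hx
  refine ⟨?_, ?_, h3 ▸ hd 2 (by norm_num)⟩
  · simpa using hd 0 (by norm_num)
  · simpa using hd 1 (by norm_num)

theorem stmt4_general (L : ℝ) (hL : 0 < L)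
    (lam : ℂ) (hlam : lam ≠ 0)
    (φ₁ φ₂ : ℝ → ℂ)
    (h1 : KdVSpectralODE lam L φ₁) (h2 : KdVSpectralODE lam L φ₂)
    (hb0 : φ₂ 0 = φ₁ 0)
    (hb2 : φ₁ L = 0) (hb3 : φ₂ L = 0)
    (hb4 : deriv φ₁ 0 = 0) (hb5 : deriv φ₂ 0 = 0)
    (hb6 : deriv φ₁ L = 0) (hb7 : iteratedDeriv 2 φ₂ L = 0)
    (hne1 : iteratedDeriv 2 φ₁ L ≠ 0)
    (hne2 : iteratedDeriv 2 φ₁ 0 ≠ iteratedDeriv 2 φ₂ 0) :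
    deriv φ₂ L = 0 := by
  have s₁ := h1.isThirdOrderSolution
  have s₂ := h2.isThirdOrderSolution
  have hWφ₂ := IsThirdOrderSolution.wronskian3_right_eq_left hL.le s₂ s₁.deriv s₂.deriv
  simp only [wronskian3_apply, hb0, hb2, hb3, hb4, hb5, hb6, hb7] at hWφ₂
  have hφ₁0 : φ₁ 0 = 0 := by
    have : lam * φ₁ 0 ^ 2 * (iteratedDeriv 2 φ₁ 0 - iteratedDeriv 2 φ₂ 0) = 0 := by
      linear_combination hWφ₂
    simpa [hlam, sub_eq_zero, hne2] using this
  have hWφ₁ := IsThirdOrderSolution.wronskian3_right_eq_left hL.le s₁ s₁.deriv s₂.deriv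
  simp only [wronskian3_apply, hb0, hb2, hb3, hb4, hb5, hb6, hb7, hφ₁0] at hWφ₁
  have : iteratedDeriv 2 φ₁ L ^ 2 * deriv φ₂ L = 0 := by
    linear_combination -hWφ₁
  simpa [hne1] using this

theorem stmt4 (L : ℝ) (hL : 0 < L) (ςNe ςDi : ℝ) (hNe : 0 < ςNe) (hDi : 0 < ςDi)
    (lam : ℂ) (hlam : lam ≠ 0)
    (hroots : ∃ μ₀ μ₁ μ₂ : ℂ, μ₀ ≠ μ₁ ∧ μ₀ ≠ μ₂ ∧ μ₁ ≠ μ₂ ∧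
      μ₀ ^ 3 + μ₀ + lam = 0 ∧ μ₁ ^ 3 + μ₁ + lam = 0 ∧ μ₂ ^ 3 + μ₂ + lam = 0)
    (φ₁ φ₂ : ℝ → ℂ)
    (h1 : KdVSpectralODE lam L φ₁) (h2 : KdVSpectralODE lam L φ₂)
    (hb0 : φ₂ 0 = φ₁ 0)
    (hb1 : (ςNe : ℂ) * iteratedDeriv 2 φ₁ 0 + (ςDi : ℂ) * iteratedDeriv 2 φ₂ 0 = 0)
    (hb2 : φ₁ L = 0) (hb3 : φ₂ L = 0)
    (hb4 : deriv φ₁ 0 = 0) (hb5 : deriv φ₂ 0 = 0)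
    (hb6 : deriv φ₁ L = 0) (hb7 : iteratedDeriv 2 φ₂ L = 0)
    (hne1 : iteratedDeriv 2 φ₁ L ≠ 0)
    (hne2 : iteratedDeriv 2 φ₁ 0 ≠ iteratedDeriv 2 φ₂ 0) :
    deriv φ₂ L = 0 :=
  stmt4_general L hL lam hlam φ₁ φ₂ h1 h2 hb0 hb2 hb3 hb4 hb5 hb6 hb7 hne1 hne2
end
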